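/- Let T be a list of natural numbers, all < 2^k, let 0 ≤ ℓ < k and 0 ≤ i < |T|, and let B = BV_ℓ(T) and Z = rank_0(B, |T|) (the total number of 0's in B). If B[i] = 0 then R_{ℓ+1}(T)[rank_0(B, i)] = R_ℓ(T)[i], and if B[i] = 1 then R_{ℓ+1}(T)[Z + rank_1(B, i)] = R_ℓ(T)[i]; i.e., the character represented at position i of level ℓ of the wavelet matrix appears at position rank_0(B, i) (respectively Z + rank_1(B, i)) on level ℓ+1. -/

import Mathlib

/-- `brev m c`: the number whose `m`-bit binary representation is the reverse of that of `c`
(bit-reversal `rev_m`). -/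
def brev (m c : ℕ) : ℕ := ∑ j ∈ Finset.range m, ((c / 2^j) % 2) * 2^(m-1-j)

/-- `bpre k ℓ c`: the bit prefix of length `ℓ` of a `k`-bit number `c`
(its `ℓ` most significant bits). -/
def bpre (k ℓ c : ℕ) : ℕ := c / 2^(k-ℓ)

/-- `wbit k j c`: the `j`-th bit (from MSB to LSB) of the `k`-bit number `c`. -/
def wbit (k j c : ℕ) : ℕ := (c / 2^(k-1-j)) % 2

/-- Level-`ℓ` stable prefix sort `S_ℓ(T)`: concatenation over `p = 0,…,2^ℓ-1` of the
sublists of `T` whose length-`ℓ` bit prefix equals `p`. -/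
def wsortS (k ℓ : ℕ) (T : List ℕ) : List ℕ :=
  (List.range (2^ℓ)).flatMap (fun p => T.filter (fun c => bpre k ℓ c = p))

/-- Level-`ℓ` stable reversed-prefix sort `R_ℓ(T)`: concatenation over `v = 0,…,2^ℓ-1` of the
sublists of `T` whose reversed length-`ℓ` bit prefix equals `v`. -/
def wsortR (k ℓ : ℕ) (T : List ℕ) : List ℕ :=
  (List.range (2^ℓ)).flatMap (fun v => T.filter (fun c => brev ℓ (bpre k ℓ c) = v))

/-- `wrank b B i`: number of occurrences of `b` among the first `i` entries of `B`. -/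
def wrank (b : ℕ) (B : List ℕ) (i : ℕ) : ℕ := ((B.take i).filter (fun x => x = b)).length

/-- `wselect b B i`: 0-based position in `B` of the `i`-th occurrence of `b`
(occurrences counted starting from `i = 1`). -/
def wselect (b : ℕ) (B : List ℕ) (i : ℕ) : ℕ :=
  ((List.range B.length).filter (fun j => B.getD j 2 = b)).getD (i-1) 0

/-- Unary histogram bit vector `U(T)` of a text over alphabet `[0,σ)`:
`1^{m_0} 0 1^{m_1} 0 ⋯ 0 1^{m_{σ-1}}` where `m_c` is the number of occurrences of `c` in `T`. -/
def unaryHist (σ : ℕ) (T : List ℕ) : List ℕ :=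
  List.intercalate [0] ((List.range σ).map (fun c => List.replicate (T.count c) 1))


lemma decide_and' (p q : Prop) [Decidable p] [Decidable q] :
    decide (p ∧ q) = (decide p && decide q) := by
  by_cases hp : p <;> by_cases hq : q <;> simp [hp, hq]

lemma sum_two_pow (m : ℕ) : ∑ j ∈ Finset.range m, 2^j = 2^m - 1 := by
  induction m with
  | zero => simp
  | succ n ih =>
    rw [Finset.sum_range_succ, ih]
    have := Nat.one_le_two_pow (n := n)
    rw [pow_succ]
    omega

lemma brev_lt (m c : ℕ) : brev m c < 2^m := by
  have h1 : brev m c ≤ ∑ j ∈ Finset.range m, 2^(m-1-j) := by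
    apply Finset.sum_le_sum
    intro j hj
    have : (c / 2^j) % 2 ≤ 1 := by omega
    calc ((c / 2^j) % 2) * 2^(m-1-j) ≤ 1 * 2^(m-1-j) := Nat.mul_le_mul_right _ this
      _ = 2^(m-1-j) := one_mul _
  have h2 : ∑ j ∈ Finset.range m, 2^(m-1-j) = 2^m - 1 := by
    rw [Finset.sum_range_reflect (fun j => 2^j) m, sum_two_pow]
  have := Nat.one_le_two_pow (n := m)
  omega

lemma brev_succ (m c : ℕ) : brev (m+1) c = (c % 2) * 2^m + brev m (c / 2) := by
  unfold brev
  rw [Finset.sum_range_succ', add_comm]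
  congr 1
  · simp
  · apply Finset.sum_congr rfl
    intro j hj
    rw [pow_succ', ← Nat.div_div_eq_div_mul]
    congr 2
    omega

lemma brev_bpre_succ (k ℓ : ℕ) (hℓ : ℓ < k) (c : ℕ) :
    brev (ℓ+1) (bpre k (ℓ+1) c) = wbit k ℓ c * 2^ℓ + brev ℓ (bpre k ℓ c) := by
  rw [brev_succ]
  congr 2
  · show bpre k (ℓ+1) c % 2 = wbit k ℓ c
    unfold bpre wbit
    congr 3
    omega
  · show bpre k (ℓ+1) c / 2 = bpre k ℓ c
    unfold bpre
    rw [Nat.div_div_eq_div_mul, ← pow_succ]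
    congr 2
    omega

lemma wbit_lt (k ℓ c : ℕ) : wbit k ℓ c < 2 := Nat.mod_lt _ (by norm_num)

lemma flatMap_congr' {α β : Type} {l : List α} {f g : α → List β}
    (h : ∀ a ∈ l, f a = g a) : l.flatMap f = l.flatMap g := by
  induction l with
  | nil => rfl
  | cons a l ih =>
    simp only [List.flatMap_cons]
    rw [h a (by simp), ih (fun x hx => h x (by simp [hx]))]

lemma filter_flatMap' {α β : Type} (l : List α) (f : α → List β) (p : β → Bool) :
    (l.flatMap f).filter p = l.flatMap fun a => (f a).filter p := by
  induction l with
  | nil => rfl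
  | cons a l ih => simp only [List.flatMap_cons, List.filter_append, ih]

lemma sum_filter_length (g : ℕ → ℕ) (N : ℕ) (T : List ℕ) (h : ∀ c ∈ T, g c < N) :
    ∑ v ∈ Finset.range N, (T.filter (fun c => g c = v)).length = T.length := by
  induction T with
  | nil => simp
  | cons a T ih =>
    have h1 : ∀ c ∈ T, g c < N := fun c hc => h c (by simp [hc])
    simp only [List.filter_cons]
    have hv' : ∀ v, ((if (g a = v : Bool) then a :: T.filter (fun c => g c = v)
        else T.filter (fun c => g c = v)).length)
        = (if g a = v then 1 else 0) + (T.filter (fun c => g c = v)).length := by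
      intro v
      by_cases hv : g a = v <;> simp [hv, Nat.add_comm]
    simp only [hv']
    rw [Finset.sum_add_distrib, ih h1, Finset.sum_ite_eq (Finset.range N) (g a) (fun _ => 1)]
    simp [Finset.mem_range.mpr (h a (by simp))]
    omega

lemma length_flatMap_filter (g : ℕ → ℕ) (N : ℕ) (T : List ℕ) (h : ∀ c ∈ T, g c < N) :
    ((List.range N).flatMap (fun v => T.filter (fun c => g c = v))).length = T.length := by
  rw [List.length_flatMap]
  have h2 : ((List.range N).map (fun v => (T.filter (fun c => g c = v)).length)).sum
      = ∑ v ∈ Finset.range N, (T.filter (fun c => g c = v)).length := rfl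
  rw [h2, sum_filter_length g N T h]

lemma length_wsortR (k ℓ : ℕ) (T : List ℕ) : (wsortR k ℓ T).length = T.length := by
  apply length_flatMap_filter
  intro c _
  exact brev_lt ℓ (bpre k ℓ c)

lemma wsortR_succ (k ℓ : ℕ) (hℓ : ℓ < k) (T : List ℕ) :
    wsortR k (ℓ+1) T =
      (wsortR k ℓ T).filter (fun c => wbit k ℓ c = 0) ++
      (wsortR k ℓ T).filter (fun c => wbit k ℓ c = 1) := by
  unfold wsortR
  rw [pow_succ, Nat.mul_two, List.range_add, List.flatMap_append, List.flatMap_map]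
  congr 1
  · rw [filter_flatMap']
    apply flatMap_congr'
    intro v hv
    rw [List.mem_range] at hv
    rw [List.filter_filter]
    apply List.filter_congr
    intro c _
    have hb := brev_bpre_succ k ℓ hℓ c
    have h1 : wbit k ℓ c < 2 := wbit_lt k ℓ c
    have h2 : brev ℓ (bpre k ℓ c) < 2^ℓ := brev_lt ℓ _
    show decide (brev (ℓ+1) (bpre k (ℓ+1) c) = v) = _
    rw [← decide_and']
    apply decide_eq_decide.mpr
    rw [hb]
    have h3 : wbit k ℓ c = 0 ∨ wbit k ℓ c = 1 := by omega
    generalize hP : (2:ℕ)^ℓ = P at h2 hv ⊢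
    rcases h3 with h | h <;> rw [h] <;> simp <;> omega
  · rw [filter_flatMap']
    apply flatMap_congr'
    intro v hv
    rw [List.mem_range] at hv
    rw [List.filter_filter]
    apply List.filter_congr
    intro c _
    have hb := brev_bpre_succ k ℓ hℓ c
    have h1 : wbit k ℓ c < 2 := wbit_lt k ℓ c
    have h2 : brev ℓ (bpre k ℓ c) < 2^ℓ := brev_lt ℓ _
    show decide (brev (ℓ+1) (bpre k (ℓ+1) c) = 2^ℓ + v) = _
    rw [← decide_and']
    apply decide_eq_decide.mpr
    rw [hb]
    have h3 : wbit k ℓ c = 0 ∨ wbit k ℓ c = 1 := by omega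
    generalize hP : (2:ℕ)^ℓ = P at h2 hv ⊢
    rcases h3 with h | h <;> rw [h] <;> simp <;> omega

lemma getD_filter_pos (L : List ℕ) (p : ℕ → Bool) (i : ℕ) (hi : i < L.length)
    (hp : p L[i] = true) (d : ℕ) :
    (L.filter p).getD ((L.take i).filter p).length d = L[i] ∧
    ((L.take i).filter p).length < (L.filter p).length := by
  have h2 : L.filter p = (L.take i).filter p ++ (L[i] :: (L.drop (i+1)).filter p) := by
    conv_lhs => rw [← List.take_append_drop i L, List.drop_eq_getElem_cons hi]
    rw [List.filter_append, List.filter_cons_of_pos hp]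
  constructor
  · rw [h2, List.getD_append_right _ _ _ _ le_rfl]
    simp
  · rw [h2]
    simp only [List.length_append, List.length_cons]
    omega

theorem wm_next_level_position (k : ℕ) (hk : 1 ≤ k) (T : List ℕ)
    (hT : ∀ c ∈ T, c < 2^k) (ℓ i : ℕ) (hℓ : ℓ < k) (hi : i < T.length) :
    let B := (wsortR k ℓ T).map (fun c => wbit k ℓ c)
    let Z := wrank 0 B T.length
    (B.getD i 2 = 0 →
        (wsortR k (ℓ+1) T).getD (wrank 0 B i) 0 = (wsortR k ℓ T).getD i 0) ∧
      (B.getD i 2 = 1 →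
        (wsortR k (ℓ+1) T).getD (Z + wrank 1 B i) 0 = (wsortR k ℓ T).getD i 0) := by
  intro B Z
  set L := wsortR k ℓ T with hLdef
  have hlen : L.length = T.length := length_wsortR k ℓ T
  have hiL : i < L.length := by rw [hlen]; exact hi
  have hW := wsortR_succ k ℓ hℓ T
  have hBi : B.getD i 2 = wbit k ℓ (L[i]) := by
    show (L.map fun c => wbit k ℓ c).getD i 2 = _
    rw [List.getD_eq_getElem _ _ (by simpa using hiL)]
    simp
  have hLgetD : L.getD i 0 = L[i] := List.getD_eq_getElem L 0 hiL
  constructor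
  · intro h0
    have hb : wbit k ℓ (L[i]) = 0 := by rw [← hBi]; exact h0
    have hr : wrank 0 B i = ((L.take i).filter (fun c => wbit k ℓ c = 0)).length := by
      show (((L.map fun c => wbit k ℓ c).take i).filter (fun x => x = 0)).length = _
      rw [← List.map_take, List.filter_map, List.length_map]
      rfl
    have hg := getD_filter_pos L (fun c => wbit k ℓ c = 0) i hiL (by simp [hb]) 0
    rw [hW, hr, List.getD_append _ _ _ _ hg.2, hg.1, hLgetD]
  · intro h1
    have hb : wbit k ℓ (L[i]) = 1 := by rw [← hBi]; exact h1
    have hZ : Z = (L.filter (fun c => wbit k ℓ c = 0)).length := by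
      show wrank 0 B T.length = _
      unfold wrank
      have hBlen : B.length = T.length := by
        show (L.map fun c => wbit k ℓ c).length = T.length
        rw [List.length_map, hlen]
      rw [← hBlen, List.take_length]
      show ((L.map fun c => wbit k ℓ c).filter (fun x => x = 0)).length = _
      rw [List.filter_map, List.length_map]
      rfl
    have hr : wrank 1 B i = ((L.take i).filter (fun c => wbit k ℓ c = 1)).length := by
      show (((L.map fun c => wbit k ℓ c).take i).filter (fun x => x = 1)).length = _
      rw [← List.map_take, List.filter_map, List.length_map]
      rfl
    have hg := getD_filter_pos L (fun c => wbit k ℓ c = 1) i hiL (by simp [hb]) 0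
    rw [hW, hZ, hr, List.getD_append_right _ _ _ _ (Nat.le_add_right _ _),
      Nat.add_sub_cancel_left, hg.1, hLgetD]
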